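/- arXiv:2301.07605 — 2 statements merged into one kernel-verified Lean document; each statement's English description precedes it below -/
import Mathlib

section
/- Let M, M₁, M₂ be symmetric positive semi-definite n×n real matrices with M = M₁ + M₂, M₂ positive definite, and rank(M₁) < n. Then Tr(M⁻²) ≥ (n − rank(M₁)) / ‖M₂‖², where ‖M₂‖ denotes the operator (spectral) norm. -/
/-!
For `x ∈ ker M₁` we have `M x = M₂ x`, so `x = M⁻¹ M₂ x` and, `M⁻¹` being symmetric,
`‖x‖² = ⟪M⁻¹ x, M₂ x⟫ ≤ ‖M⁻¹ x‖ ‖M₂‖ ‖x‖`. Thus `‖M⁻¹ x‖² ≥ 1 / ‖M₂‖²` on the unit vectors of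
`ker M₁`, a space of dimension `n - rank M₁`. Extending an orthonormal basis of `ker M₁` to one of
the whole space and computing `Tr(M⁻²) = ∑ ‖M⁻¹ bᵢ‖²` in it gives the bound.
-/

/-- The ℓ²→ℓ² operator (spectral) norm of a square real matrix. -/
noncomputable def opNorm {n : ℕ} (M : Matrix (Fin n) (Fin n) ℝ) : ℝ :=
  ‖Matrix.toEuclideanCLM (𝕜 := ℝ) M‖

open Module

namespace Matrix

variable {m n R : Type*} [Fintype n] [DecidableEq n] (p : ENNReal)

theorem trace_toLpLin [CommRing R] (A : Matrix n n R) :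
    LinearMap.trace R _ (toLpLin p p A) = A.trace := by
  rw [LinearMap.trace_eq_matrix_trace R (PiLp.basisFun p R n), toLpLin_eq_toLin,
    LinearMap.toMatrix_toLin]

theorem finrank_ker_toLpLin [Finite m] [Field R] (A : Matrix m n R) :
    finrank R (LinearMap.ker (toLpLin p p A)) = Fintype.card n - A.rank := by
  have h := LinearMap.finrank_range_add_finrank_ker (toLpLin p p A)
  rw [toLpLin_eq_toLin, ← rank_eq_finrank_range_toLin,
    finrank_eq_card_basis (PiLp.basisFun p R n)] at h
  rw [toLpLin_eq_toLin]
  omega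

end Matrix

open RCLike Finset

section InnerProductSpace

variable {𝕜 E : Type*} [RCLike 𝕜] [NormedAddCommGroup E] [InnerProductSpace 𝕜 E]

open scoped InnerProductSpace

theorem Orthonormal.sum_re_inner_le_re_trace [FiniteDimensional 𝕜 E] {ι : Type*} [Fintype ι]
    {T : E →ₗ[𝕜] E} (hT : T.IsPositive) {v : ι → E} (hv : Orthonormal 𝕜 v) :
    ∑ i, re ⟪v i, T (v i)⟫_𝕜 ≤ re (LinearMap.trace 𝕜 E T) := by
  classical
  obtain ⟨u, b, hvu, hb⟩ := hv.toSubtypeRange.exists_orthonormalBasis_extension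
  have himage : univ.image v ⊆ u := fun x hx ↦ by
    obtain ⟨i, -, rfl⟩ := mem_image.mp hx
    exact hvu (Set.mem_range_self i)
  rw [T.trace_eq_sum_inner b, map_sum, hb]
  calc ∑ i, re ⟪v i, T (v i)⟫_𝕜 = ∑ x ∈ univ.image v, re ⟪x, T x⟫_𝕜 :=
        (sum_image (f := fun x ↦ re ⟪x, T x⟫_𝕜)
          fun i _ j _ h ↦ hv.linearIndependent.injective h).symm
    _ ≤ ∑ x ∈ u, re ⟪x, T x⟫_𝕜 :=
        sum_le_sum_of_subset_of_nonneg himage fun x _ _ ↦ hT.re_inner_nonneg_right x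
    _ = ∑ x : u, re ⟪(x : E), T x⟫_𝕜 := (sum_coe_sort u _).symm

variable [CompleteSpace E]

theorem IsSelfAdjoint.norm_le_norm_mul_norm_apply {S B : E →L[𝕜] E} (hS : IsSelfAdjoint S)
    {x : E} (hx : S (B x) = x) : ‖x‖ ≤ ‖B‖ * ‖S x‖ := by
  have hsq : ‖x‖ * ‖x‖ ≤ ‖B‖ * ‖S x‖ * ‖x‖ :=
    calc ‖x‖ * ‖x‖ = re ⟪x, S (B x)⟫_𝕜 := by rw [hx, ← sq, inner_self_eq_norm_sq]
      _ = re ⟪S x, B x⟫_𝕜 := congrArg re (hS.isSymmetric x (B x)).symm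
      _ ≤ ‖S x‖ * ‖B x‖ := re_inner_le_norm _ _
      _ ≤ ‖S x‖ * (‖B‖ * ‖x‖) := by gcongr; exact B.le_opNorm x
      _ = ‖B‖ * ‖S x‖ * ‖x‖ := by ring
  rcases (norm_nonneg x).eq_or_lt with hx0 | hx0
  · rw [← hx0]; positivity
  · exact le_of_mul_le_mul_right hsq hx0

theorem ContinuousLinearMap.finrank_ker_div_sq_le_re_trace [FiniteDimensional 𝕜 E] {A₁ A₂ S : E →L[𝕜] E}
    (hS : IsSelfAdjoint S) (hinv : S * (A₁ + A₂) = 1) :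
    (finrank 𝕜 (LinearMap.ker (A₁ : E →ₗ[𝕜] E)) : ℝ) / ‖A₂‖ ^ 2 ≤
      re (LinearMap.trace 𝕜 E ↑(S * S)) := by
  set K := LinearMap.ker (A₁ : E →ₗ[𝕜] E)
  set v : Fin (finrank 𝕜 K) → E := fun i ↦ stdOrthonormalBasis 𝕜 K i
  have hv : Orthonormal 𝕜 v := (stdOrthonormalBasis 𝕜 K).orthonormal.comp_linearIsometry K.subtypeₗᵢ
  have hSS : (S * S).IsPositive := by
    have h := S.isPositive_adjoint_comp_self
    rw [hS.adjoint_eq] at h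
    exact h
  have hlow (i) : 1 / ‖A₂‖ ^ 2 ≤ re ⟪v i, (S * S) (v i)⟫_𝕜 := by
    have hker : A₁ (v i) = 0 := (stdOrthonormalBasis 𝕜 K i).2
    have hfix : S (A₂ (v i)) = v i := by
      simpa [hker] using congr($hinv (v i))
    have h := hS.norm_le_norm_mul_norm_apply hfix
    rw [hv.1 i] at h
    have hsym : ⟪v i, (S * S) (v i)⟫_𝕜 = ⟪S (v i), S (v i)⟫_𝕜 := (hS.isSymmetric _ _).symm
    rw [hsym, inner_self_eq_norm_sq]
    exact div_le_of_le_mul₀ (sq_nonneg _) (sq_nonneg _) (by nlinarith [norm_nonneg (S (v i))])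
  calc (finrank 𝕜 K : ℝ) / ‖A₂‖ ^ 2 = ∑ _i : Fin (finrank 𝕜 K), 1 / ‖A₂‖ ^ 2 := by
        rw [sum_const, card_univ, Fintype.card_fin, nsmul_eq_mul, mul_one_div]
    _ ≤ ∑ i, re ⟪v i, (S * S) (v i)⟫_𝕜 := sum_le_sum fun i _ ↦ hlow i
    _ ≤ re (LinearMap.trace 𝕜 E ↑(S * S)) := hv.sum_re_inner_le_re_trace hSS.toLinearMap

end InnerProductSpace

open Matrix in
theorem trace_inv_sq_lower_bound_general {n : ℕ}
    (M M₁ M₂ : Matrix (Fin n) (Fin n) ℝ)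
    (hM : M = M₁ + M₂) (h₁ : M₁.PosSemidef) (h₂ : M₂.PosDef) :
    ((n - M₁.rank : ℕ) : ℝ) / (opNorm M₂) ^ 2 ≤ (M⁻¹ * M⁻¹).trace := by
  have hM_pd : M.PosDef := hM ▸ h₂.posSemidef_add h₁
  have hS : IsSelfAdjoint (toEuclideanCLM (𝕜 := ℝ) M⁻¹) :=
    hM_pd.inv.isHermitian.isSelfAdjoint.map _
  have hinv : toEuclideanCLM (𝕜 := ℝ) M⁻¹ *
      (toEuclideanCLM (𝕜 := ℝ) M₁ + toEuclideanCLM (𝕜 := ℝ) M₂) = 1 := by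
    rw [← map_add, ← hM, ← map_mul,
      nonsing_inv_mul _ (M.isUnit_iff_isUnit_det.mp hM_pd.isUnit), map_one]
  have h := ContinuousLinearMap.finrank_ker_div_sq_le_re_trace hS hinv
  rwa [← map_mul, coe_toEuclideanCLM_eq_toEuclideanLin, coe_toEuclideanCLM_eq_toEuclideanLin,
    trace_toLpLin, re_to_real, finrank_ker_toLpLin, Fintype.card_fin] at h

/-- Trace of the inverse squared: `Tr(M⁻²) ≥ (n − rank M₁)/‖M₂‖²`. -/
theorem trace_inv_sq_lower_bound {n : ℕ}
    (M M₁ M₂ : Matrix (Fin n) (Fin n) ℝ)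
    (hM : M = M₁ + M₂) (h₁ : M₁.PosSemidef) (h₂ : M₂.PosDef)
    (hrank : M₁.rank < n) :
    ((n - M₁.rank : ℕ) : ℝ) / (opNorm M₂) ^ 2 ≤ (M⁻¹ * M⁻¹).trace :=
  trace_inv_sq_lower_bound_general M M₁ M₂ hM h₁ h₂
end

section
/- Let D be an m×m positive definite diagonal matrix, P an n×m real matrix, and H_{>m} an invertible symmetric n×n matrix such that H := P D Pᵀ + H_{>m} is invertible and D⁻¹ + Pᵀ H_{>m}⁻¹ P is invertible. Then D Pᵀ H⁻² P D = (D⁻¹ + Pᵀ H_{>m}⁻¹ P)⁻¹ (Pᵀ H_{>m}⁻² P) (D⁻¹ + Pᵀ H_{>m}⁻¹ P)⁻¹. -/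
open Matrix

/-- Woodbury-type identity:
`D Pᵀ H⁻² P D = (D⁻¹ + Pᵀ H_{>m}⁻¹ P)⁻¹ (Pᵀ H_{>m}⁻² P) (D⁻¹ + Pᵀ H_{>m}⁻¹ P)⁻¹`. -/
theorem woodbury_sandwich {n m : ℕ}
    (D : Matrix (Fin m) (Fin m) ℝ) (P : Matrix (Fin n) (Fin m) ℝ)
    (Hgt : Matrix (Fin n) (Fin n) ℝ)
    (hDdiag : D.IsDiag) (hDpos : D.PosDef)
    (hHgtsym : Hgt.IsHermitian) (hHgt : IsUnit Hgt.det)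
    (H : Matrix (Fin n) (Fin n) ℝ) (hH : H = P * D * Pᵀ + Hgt)
    (hHinv : IsUnit H.det)
    (hmid : IsUnit (D⁻¹ + Pᵀ * Hgt⁻¹ * P).det) :
    D * Pᵀ * (H⁻¹ * H⁻¹) * P * D
      = (D⁻¹ + Pᵀ * Hgt⁻¹ * P)⁻¹ * (Pᵀ * (Hgt⁻¹ * Hgt⁻¹) * P)
        * (D⁻¹ + Pᵀ * Hgt⁻¹ * P)⁻¹ := by
  set M := D⁻¹ + Pᵀ * Hgt⁻¹ * P with hM
  have hD : IsUnit D.det := isUnit_iff_ne_zero.mpr (ne_of_gt hDpos.det_pos)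
  have hDD : D * D⁻¹ = 1 := Matrix.mul_nonsing_inv D hD
  have hDD' : D⁻¹ * D = 1 := Matrix.nonsing_inv_mul D hD
  have hGG : Hgt * Hgt⁻¹ = 1 := Matrix.mul_nonsing_inv Hgt hHgt
  have hGG' : Hgt⁻¹ * Hgt = 1 := Matrix.nonsing_inv_mul Hgt hHgt
  have hHH : H * H⁻¹ = 1 := Matrix.mul_nonsing_inv H hHinv
  have hHH' : H⁻¹ * H = 1 := Matrix.nonsing_inv_mul H hHinv
  have key1 : M * (D * Pᵀ) = Pᵀ * Hgt⁻¹ * H := by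
    rw [hM, hH]
    calc (D⁻¹ + Pᵀ * Hgt⁻¹ * P) * (D * Pᵀ)
        = D⁻¹ * D * Pᵀ + Pᵀ * Hgt⁻¹ * (P * D * Pᵀ) := by simp only [Matrix.mul_assoc, Matrix.add_mul, Matrix.mul_add]
      _ = Pᵀ * (Hgt⁻¹ * Hgt) + Pᵀ * Hgt⁻¹ * (P * D * Pᵀ) := by rw [hDD', hGG']; simp only [Matrix.mul_assoc, Matrix.one_mul, Matrix.mul_one]
      _ = Pᵀ * Hgt⁻¹ * (P * D * Pᵀ + Hgt) := by simp only [Matrix.mul_assoc, Matrix.add_mul, Matrix.mul_add]; abel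
  have key2 : (P * D) * M = H * (Hgt⁻¹ * P) := by
    rw [hM, hH]
    calc (P * D) * (D⁻¹ + Pᵀ * Hgt⁻¹ * P)
        = P * (D * D⁻¹) + P * D * Pᵀ * (Hgt⁻¹ * P) := by simp only [Matrix.mul_assoc, Matrix.add_mul, Matrix.mul_add]
      _ = Hgt * Hgt⁻¹ * P + P * D * Pᵀ * (Hgt⁻¹ * P) := by rw [hDD, hGG]; simp only [Matrix.mul_assoc, Matrix.one_mul, Matrix.mul_one]
      _ = (P * D * Pᵀ + Hgt) * (Hgt⁻¹ * P) := by simp only [Matrix.mul_assoc, Matrix.add_mul, Matrix.mul_add]; abel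
  have eq1 : D * Pᵀ * H⁻¹ = M⁻¹ * (Pᵀ * Hgt⁻¹) := by
    have : M * (D * Pᵀ * H⁻¹) = Pᵀ * Hgt⁻¹ := by
      calc M * (D * Pᵀ * H⁻¹) = M * (D * Pᵀ) * H⁻¹ := by simp only [Matrix.mul_assoc, Matrix.add_mul, Matrix.mul_add]
        _ = Pᵀ * Hgt⁻¹ * (H * H⁻¹) := by rw [key1]; simp only [Matrix.mul_assoc, Matrix.add_mul, Matrix.mul_add]
        _ = Pᵀ * Hgt⁻¹ := by rw [hHH, Matrix.mul_one]
    calc D * Pᵀ * H⁻¹ = (M⁻¹ * M) * (D * Pᵀ * H⁻¹) := by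
          rw [Matrix.nonsing_inv_mul M hmid, Matrix.one_mul]
      _ = M⁻¹ * (Pᵀ * Hgt⁻¹) := by rw [Matrix.mul_assoc, this]
  have eq2 : H⁻¹ * (P * D) = Hgt⁻¹ * P * M⁻¹ := by
    have : (H⁻¹ * (P * D)) * M = Hgt⁻¹ * P := by
      calc (H⁻¹ * (P * D)) * M = H⁻¹ * ((P * D) * M) := by simp only [Matrix.mul_assoc, Matrix.add_mul, Matrix.mul_add]
        _ = (H⁻¹ * H) * (Hgt⁻¹ * P) := by rw [key2]; simp only [Matrix.mul_assoc, Matrix.add_mul, Matrix.mul_add]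
        _ = Hgt⁻¹ * P := by rw [hHH', Matrix.one_mul]
    calc H⁻¹ * (P * D) = (H⁻¹ * (P * D)) * (M * M⁻¹) := by
          rw [Matrix.mul_nonsing_inv M hmid, Matrix.mul_one]
      _ = Hgt⁻¹ * P * M⁻¹ := by rw [← Matrix.mul_assoc, this]
  calc D * Pᵀ * (H⁻¹ * H⁻¹) * P * D
      = (D * Pᵀ * H⁻¹) * (H⁻¹ * (P * D)) := by simp only [Matrix.mul_assoc, Matrix.add_mul, Matrix.mul_add]
    _ = (M⁻¹ * (Pᵀ * Hgt⁻¹)) * (Hgt⁻¹ * P * M⁻¹) := by rw [eq1, eq2]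
    _ = M⁻¹ * (Pᵀ * (Hgt⁻¹ * Hgt⁻¹) * P) * M⁻¹ := by simp only [Matrix.mul_assoc, Matrix.add_mul, Matrix.mul_add]
end
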